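/- Let A be a symmetric idempotent n×n real matrix of rank j, and let u = (u_1, …, u_n) be a vector of independent random variables with E u_i = 0 and E e^{t u_i} ≤ e^{t²/2} for all t ∈ ℝ. Then for every m > j, P( uᵀ A u > m ) ≤ exp( −m/2 + √(2 m j − j²)/2 ), and consequently P( uᵀ A u > m ) ≤ exp( −m/2 + √(2 m j)/2 ). -/

import Mathlib

/-!
Write `A = Qᵀ Q` with `Q` a `j × n` matrix with orthonormal rows (spectral theorem: the eigenvalues
of `A` are `0` or `1`), so that `uᵀ A u = |Q u|²`. Linearizing the square with a standard Gaussian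
vector `g ∈ ℝʲ`, `exp (λ |Q u|²) = E_g exp (√(2λ) ⟪Qᵀ g, u⟫)`; after exchanging the integrals the
sub-Gaussian bound for `⟪Qᵀ g, u⟫` and `|Qᵀ g| = |g|` give `E exp (λ |Q u|²) ≤ (1 - 2λ)^(-j/2)`.
The Chernoff bound with `1 - 2λ = s = √(j / (2m - j))`, together with
`-log s ≤ sinh (-log s) = (s⁻¹ - s) / 2`, yields the stated exponent.
-/

open MeasureTheory ProbabilityTheory Matrix Real

theorem Matrix.exists_transpose_mul_self_eq_of_idempotent {n : Type*} [Fintype n] [DecidableEq n]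
    {A : Matrix n n ℝ} (hA : Aᵀ = A) (hA2 : IsIdempotentElem A) :
    ∃ Q : Matrix (Fin A.rank) n ℝ, Q * Qᵀ = 1 ∧ Qᵀ * Q = A := by
  have hH : A.IsHermitian := by simpa [IsHermitian] using hA
  set U : Matrix n n ℝ := (hH.eigenvectorUnitary : Matrix n n ℝ)
  have hstar : star U = Uᵀ := by simp [star_eq_conjTranspose]
  have hUU : Uᵀ * U = 1 := hstar ▸ Unitary.coe_star_mul_self hH.eigenvectorUnitary
  have hev (i : n) : hH.eigenvalues i = 0 ∨ hH.eigenvalues i = 1 :=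
    hA2.spectrum_subset ℝ (hH.eigenvalues_mem_spectrum_real i)
  let e : Fin A.rank ≃ {i // hH.eigenvalues i ≠ 0} :=
    Fintype.equivFinOfCardEq hH.rank_eq_card_non_zero_eigs.symm |>.symm
  have he : Function.Injective (fun k ↦ (e k : n)) := Subtype.val_injective.comp e.injective
  refine ⟨Uᵀ.submatrix (fun k ↦ e k) id, ?_, ?_⟩
  · rw [transpose_submatrix, transpose_transpose, ← submatrix_mul _ _ _ _ _ Function.bijective_id,
      hUU, submatrix_one _ he]
  · have hspec : A = U * diagonal hH.eigenvalues * Uᵀ := by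
      conv_lhs => rw [hH.spectral_theorem, Unitary.conjStarAlgAut_apply]
      simp [U, hstar]
    ext a b
    rw [congr_fun₂ hspec a b]
    simp only [mul_apply (M := U * _), mul_diagonal, mul_apply (M := _ᵀ), submatrix_apply,
      transpose_apply, id]
    rw [← Fintype.sum_subtype_add_sum_subtype (fun i ↦ hH.eigenvalues i ≠ 0), ← e.sum_comp]
    have hzero : ∑ i : {i // ¬hH.eigenvalues i ≠ 0}, U a i * hH.eigenvalues i * U b i = 0 :=
      Finset.sum_eq_zero fun i _ ↦ by simp [not_not.mp i.2]
    rw [hzero, add_zero]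
    refine Finset.sum_congr rfl fun k _ ↦ ?_
    rw [(hev _).resolve_left (e k).2, mul_one]

theorem dotProduct_transpose_mul_mulVec {m n : Type*} [Fintype m] [Fintype n]
    (Q : Matrix m n ℝ) (x : n → ℝ) : x ⬝ᵥ (Qᵀ * Q) *ᵥ x = Q *ᵥ x ⬝ᵥ Q *ᵥ x := by
  rw [← mulVec_mulVec, dotProduct_mulVec, vecMul_transpose]

/-- For `l ≥ 1 / 2` both sides are junk `0`: the integrand is not integrable and `√` of a
nonpositive number is `0`. -/
theorem integral_exp_mul_sq_gaussianReal (l : ℝ) :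
    ∫ x, exp (l * x ^ 2) ∂gaussianReal 0 1 = (√(1 - 2 * l))⁻¹ := by
  have hpdf (x : ℝ) : gaussianPDFReal 0 1 x • exp (l * x ^ 2)
      = (√(2 * π))⁻¹ * exp (-(1 / 2 - l) * x ^ 2) := by
    rw [gaussianPDFReal_def, smul_eq_mul, mul_assoc, ← exp_add]
    simp only [NNReal.coe_one, mul_one, sub_zero]
    ring_nf
  rw [integral_gaussianReal_eq_integral_smul one_ne_zero]
  simp_rw [hpdf]
  rw [integral_const_mul, integral_gaussian, ← sqrt_inv, ← sqrt_inv,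
    ← sqrt_mul (by positivity)]
  congr 1
  field_simp

theorem lintegral_ofReal_exp_eq_of_integral_eq {α : Type*} [MeasurableSpace α] {μ : Measure α}
    {f : α → ℝ} {c : ℝ} (h : ∫ x, exp (f x) ∂μ = c) (hc : c ≠ 0) :
    ∫⁻ x, ENNReal.ofReal (exp (f x)) ∂μ = ENNReal.ofReal c := by
  rw [← h, ofReal_integral_eq_lintegral_ofReal (.of_integral_ne_zero (h ▸ hc))
    (ae_of_all _ fun x ↦ (exp_pos _).le)]

section

variable {Ω : Type*} [MeasurableSpace Ω] {μ : Measure Ω} {ι κ : Type*} [Fintype ι] [Fintype κ]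

theorem integral_exp_dotProduct_pi_gaussianReal (a : κ → ℝ) :
    ∫ g, exp (a ⬝ᵥ g) ∂Measure.pi (fun _ : κ ↦ gaussianReal 0 1) = exp (a ⬝ᵥ a / 2) := by
  simp_rw [dotProduct, Finset.sum_div, exp_sum]
  rw [integral_fintype_prod_eq_prod (fun (k : κ) (x : ℝ) ↦ exp (a k * x))]
  refine Fintype.prod_congr _ _ fun k ↦ ?_
  simpa [mgf, sq] using congr_fun (mgf_id_gaussianReal (μ := 0) (v := 1)) (a k)

theorem integral_exp_mul_dotProduct_self_pi_gaussianReal (l : ℝ) :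
    ∫ g, exp (l * g ⬝ᵥ g) ∂Measure.pi (fun _ : κ ↦ gaussianReal 0 1)
      = (√(1 - 2 * l))⁻¹ ^ Fintype.card κ := by
  simp_rw [dotProduct, Finset.mul_sum, exp_sum, ← sq]
  rw [integral_fintype_prod_eq_prod (fun (_ : κ) (x : ℝ) ↦ exp (l * x ^ 2))]
  simp [integral_exp_mul_sq_gaussianReal]

theorem hasSubgaussianMGF_dotProduct_of_iIndepFun {X : ι → Ω → ℝ} (h_indep : iIndepFun X μ)
    (hX : ∀ i, HasSubgaussianMGF (X i) 1 μ) (w : ι → ℝ) :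
    HasSubgaussianMGF (fun ω ↦ w ⬝ᵥ fun i ↦ X i ω) (w ⬝ᵥ w).toNNReal μ := by
  have h := HasSubgaussianMGF.sum_of_iIndepFun (s := Finset.univ)
    (h_indep.comp (fun i x ↦ w i * x) fun i ↦ measurable_const_mul (w i))
    fun i _ ↦ (hX i).const_mul (w i)
  convert h using 1
  · rfl
  ext
  rw [Real.coe_toNNReal _ (by simpa using dotProduct_self_star_nonneg w), NNReal.coe_sum]
  refine Finset.sum_congr rfl fun i _ ↦ ?_
  change _ = w i ^ 2 * 1
  ring

theorem lintegral_exp_dotProduct_le {X : ι → Ω → ℝ} (h_indep : iIndepFun X μ)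
    (hX : ∀ i, HasSubgaussianMGF (X i) 1 μ) (w : ι → ℝ) :
    ∫⁻ ω, ENNReal.ofReal (exp (w ⬝ᵥ fun i ↦ X i ω)) ∂μ ≤ ENNReal.ofReal (exp (w ⬝ᵥ w / 2)) := by
  have h := hasSubgaussianMGF_dotProduct_of_iIndepFun h_indep hX w
  have hint := h.integrable_exp_mul 1
  simp only [one_mul] at hint
  rw [← ofReal_integral_eq_lintegral_ofReal hint (ae_of_all _ fun ω ↦ (exp_pos _).le)]
  refine ENNReal.ofReal_le_ofReal ((h.mgf_le 1).trans_eq ?_) |>.trans_eq' ?_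
  · rw [Real.coe_toNNReal _ (by simpa using dotProduct_self_star_nonneg w)]
    ring_nf
  · simp [mgf]

theorem lintegral_exp_mul_quadForm_le [SFinite μ] [DecidableEq κ] {Q : Matrix κ ι ℝ}
    (hQ : Q * Qᵀ = 1) {X : ι → Ω → ℝ} (hX_meas : ∀ i, Measurable (X i))
    (h_indep : iIndepFun X μ) (hX : ∀ i, HasSubgaussianMGF (X i) 1 μ) {l : ℝ} (hl₀ : 0 ≤ l)
    (hl : l < 1 / 2) :
    ∫⁻ ω, ENNReal.ofReal (exp (l * (Q *ᵥ fun i ↦ X i ω) ⬝ᵥ (Q *ᵥ fun i ↦ X i ω))) ∂μ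
      ≤ ENNReal.ofReal ((√(1 - 2 * l))⁻¹ ^ Fintype.card κ) := by
  set γ := Measure.pi fun _ : κ ↦ gaussianReal 0 1
  set c := √(2 * l)
  have hc : c ^ 2 = 2 * l := sq_sqrt (by linarith)
  have hQt (g : κ → ℝ) : Qᵀ *ᵥ g ⬝ᵥ Qᵀ *ᵥ g = g ⬝ᵥ g := by
    rw [← dotProduct_transpose_mul_mulVec, transpose_transpose, hQ, one_mulVec]
  have hlinearize (v : κ → ℝ) :
      ENNReal.ofReal (exp (l * v ⬝ᵥ v)) = ∫⁻ g, ENNReal.ofReal (exp (c • v ⬝ᵥ g)) ∂γ := by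
    rw [lintegral_ofReal_exp_eq_of_integral_eq (integral_exp_dotProduct_pi_gaussianReal _)
      (exp_pos _).ne', smul_dotProduct, dotProduct_smul, smul_eq_mul, smul_eq_mul, ← mul_assoc,
      ← sq, hc]
    ring_nf
  have hswap (x : ι → ℝ) (g : κ → ℝ) : c • (Q *ᵥ x) ⬝ᵥ g = c • (Qᵀ *ᵥ g) ⬝ᵥ x := by
    rw [smul_dotProduct, smul_dotProduct, dotProduct_comm, dotProduct_mulVec, mulVec_transpose]
  calc ∫⁻ ω, ENNReal.ofReal (exp (l * (Q *ᵥ fun i ↦ X i ω) ⬝ᵥ (Q *ᵥ fun i ↦ X i ω))) ∂μ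
      = ∫⁻ ω, ∫⁻ g, ENNReal.ofReal (exp (c • (Qᵀ *ᵥ g) ⬝ᵥ fun i ↦ X i ω)) ∂γ ∂μ := by
        simp_rw [hlinearize, hswap]
    _ = ∫⁻ g, ∫⁻ ω, ENNReal.ofReal (exp (c • (Qᵀ *ᵥ g) ⬝ᵥ fun i ↦ X i ω)) ∂μ ∂γ := by
        refine lintegral_lintegral_swap (Measurable.aemeasurable ?_)
        simp only [dotProduct, mulVec, Pi.smul_apply, smul_eq_mul]
        fun_prop
    _ ≤ ∫⁻ g, ENNReal.ofReal (exp (l * g ⬝ᵥ g)) ∂γ := by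
        refine lintegral_mono fun g ↦ (lintegral_exp_dotProduct_le h_indep hX _).trans_eq ?_
        rw [smul_dotProduct, dotProduct_smul, hQt, smul_eq_mul, smul_eq_mul, ← mul_assoc, ← sq, hc]
        ring_nf
    _ = ENNReal.ofReal ((√(1 - 2 * l))⁻¹ ^ Fintype.card κ) :=
        lintegral_ofReal_exp_eq_of_integral_eq
          (integral_exp_mul_dotProduct_self_pi_gaussianReal l)
          (pow_pos (inv_pos.2 (sqrt_pos.2 (by linarith))) _).ne'

theorem measure_lt_le_exp_mul_lintegral {f : Ω → ℝ} (hf : AEMeasurable f μ) {t : ℝ} (ht : 0 ≤ t)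
    (m : ℝ) :
    μ {ω | m < f ω}
      ≤ ENNReal.ofReal (exp (-(t * m))) * ∫⁻ ω, ENNReal.ofReal (exp (t * f ω)) ∂μ := by
  have hmarkov := mul_meas_ge_le_lintegral₀ (hf.const_mul t).exp.ennreal_ofReal
    (ENNReal.ofReal (exp (t * m)))
  have hsub : {ω | m < f ω} ⊆ {ω | ENNReal.ofReal (exp (t * m)) ≤ ENNReal.ofReal (exp (t * f ω))} :=
    fun ω hω ↦ ENNReal.ofReal_le_ofReal (exp_le_exp.2 (by gcongr; exact le_of_lt hω))
  calc μ {ω | m < f ω}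
      = ENNReal.ofReal (exp (-(t * m))) * (ENNReal.ofReal (exp (t * m)) * μ {ω | m < f ω}) := by
        rw [← mul_assoc, ← ENNReal.ofReal_mul (exp_pos _).le, ← exp_add, neg_add_cancel, exp_zero,
          ENNReal.ofReal_one, one_mul]
    _ ≤ _ := by gcongr; exact (mul_le_mul_right (measure_mono hsub) _).trans hmarkov

theorem measure_lt_quadForm_le [SFinite μ] [DecidableEq κ] {Q : Matrix κ ι ℝ}
    (hQ : Q * Qᵀ = 1) {X : ι → Ω → ℝ} (hX_meas : ∀ i, Measurable (X i))
    (h_indep : iIndepFun X μ) (hX : ∀ i, HasSubgaussianMGF (X i) 1 μ) {l : ℝ} (hl₀ : 0 ≤ l)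
    (hl : l < 1 / 2) (m : ℝ) :
    μ {ω | m < (Q *ᵥ fun i ↦ X i ω) ⬝ᵥ (Q *ᵥ fun i ↦ X i ω)}
      ≤ ENNReal.ofReal (exp (-(l * m)) * (√(1 - 2 * l))⁻¹ ^ Fintype.card κ) := by
  have hmeas : Measurable fun ω ↦ (Q *ᵥ fun i ↦ X i ω) ⬝ᵥ (Q *ᵥ fun i ↦ X i ω) := by
    simp only [dotProduct, mulVec]
    fun_prop
  refine (measure_lt_le_exp_mul_lintegral hmeas.aemeasurable hl₀ m).trans ?_
  rw [ENNReal.ofReal_mul (exp_pos _).le]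
  gcongr
  exact lintegral_exp_mul_quadForm_le hQ hX_meas h_indep hX hl₀ hl

end

theorem inv_sqrt_le_exp {s : ℝ} (hs : 0 < s) (hs1 : s ≤ 1) : (√s)⁻¹ ≤ exp ((s⁻¹ - s) / 4) := by
  have hlog : 0 ≤ log s⁻¹ := log_nonneg (one_le_inv₀ hs |>.2 hs1)
  calc (√s)⁻¹ = exp (log s⁻¹ / 2) := by
        rw [← sqrt_inv, sqrt_eq_rpow, rpow_def_of_pos (inv_pos.2 hs)]
        ring_nf
    _ ≤ exp (sinh (log s⁻¹) / 2) := by gcongr; exact self_le_sinh_iff.2 hlog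
    _ = exp ((s⁻¹ - s) / 4) := by
        rw [sinh_log (inv_pos.2 hs), inv_inv]
        ring_nf

theorem exp_neg_mul_mul_inv_sqrt_pow_le {j : ℕ} {m s : ℝ} (hm : (j : ℝ) < m) (hs : 0 < s)
    (hs1 : s ≤ 1) (hsj : s ^ 2 * (2 * m - j) = j) :
    exp (-((1 - s) / 2 * m)) * (√s)⁻¹ ^ j ≤ exp (-m / 2 + √(2 * m * j - j ^ 2) / 2) := by
  have hj : (0 : ℝ) ≤ j := j.cast_nonneg
  have hjs : j * s⁻¹ = s * (2 * m - j) := by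
    rw [mul_inv_eq_iff_eq_mul₀ hs.ne']
    linear_combination -hsj
  have hsqrt : √(2 * m * j - j ^ 2) = s * (2 * m - j) := by
    rw [← sqrt_sq (by nlinarith : 0 ≤ s * (2 * m - j))]
    congr 1
    linear_combination (j - 2 * m) * hsj
  calc exp (-((1 - s) / 2 * m)) * (√s)⁻¹ ^ j
      ≤ exp (-((1 - s) / 2 * m)) * exp ((s⁻¹ - s) / 4) ^ j := by
        gcongr; exact inv_sqrt_le_exp hs hs1
    _ = exp (-m / 2 + √(2 * m * j - j ^ 2) / 2) := by
        rw [← exp_nat_mul, ← exp_add, hsqrt]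
        congr 1
        linear_combination hjs / 4

theorem quadform_tail_bound'_general
    {Ω : Type} [MeasurableSpace Ω] (P : Measure Ω) [IsProbabilityMeasure P]
    {n j : ℕ} (A : Matrix (Fin n) (Fin n) ℝ)
    (hAsymm : Aᵀ = A) (hAidem : A * A = A) (hArank : A.rank = j)
    (u : Fin n → Ω → ℝ)
    (hmeas : ∀ i, Measurable (u i))
    (hindep : iIndepFun u P)
    (hmgfint : ∀ i (t : ℝ), Integrable (fun ω => Real.exp (t * u i ω)) P)
    (hsubg : ∀ i (t : ℝ), ∫ ω, Real.exp (t * u i ω) ∂P ≤ Real.exp (t ^ 2 / 2))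
    (m : ℝ) (hm : (j : ℝ) < m) :
    P {ω | (fun i => u i ω) ⬝ᵥ A.mulVec (fun i => u i ω) > m} ≤
        ENNReal.ofReal (Real.exp (-m / 2 + Real.sqrt (2 * m * j - (j : ℝ) ^ 2) / 2)) ∧
      P {ω | (fun i => u i ω) ⬝ᵥ A.mulVec (fun i => u i ω) > m} ≤
        ENNReal.ofReal (Real.exp (-m / 2 + Real.sqrt (2 * m * j) / 2)) := by
  suffices h : P {ω | (fun i => u i ω) ⬝ᵥ A.mulVec (fun i => u i ω) > m} ≤
      ENNReal.ofReal (exp (-m / 2 + √(2 * m * j - (j : ℝ) ^ 2) / 2)) from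
    ⟨h, h.trans (by gcongr; exact sub_le_self _ (sq_nonneg _))⟩
  obtain ⟨Q, hQ, hQA⟩ := exists_transpose_mul_self_eq_of_idempotent hAsymm hAidem
  have hset : {ω | (fun i => u i ω) ⬝ᵥ A.mulVec (fun i => u i ω) > m}
      = {ω | m < (Q *ᵥ fun i ↦ u i ω) ⬝ᵥ (Q *ᵥ fun i ↦ u i ω)} := by
    simp_rw [← dotProduct_transpose_mul_mulVec, hQA]
  rw [hset]
  rcases j.eq_zero_or_pos with rfl | hj
  · have : IsEmpty (Fin A.rank) := hArank ▸ Fin.isEmpty'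
    rw [Nat.cast_zero] at hm
    simp [dotProduct_of_isEmpty, hm.not_gt]
  have h2mj : (0 : ℝ) < 2 * m - j := by linarith
  set s := √(j / (2 * m - j))
  have hjm : 0 < (j : ℝ) / (2 * m - j) := div_pos (Nat.cast_pos.2 hj) h2mj
  have hs : 0 < s := sqrt_pos.2 hjm
  have hsj : s ^ 2 * (2 * m - j) = j := by rw [sq_sqrt hjm.le, div_mul_cancel₀ _ h2mj.ne']
  have hs1 : s ≤ 1 := sqrt_le_one.2 ((div_le_one h2mj).2 (by linarith))
  have hsubG (i : Fin n) : HasSubgaussianMGF (u i) 1 P :=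
    ⟨hmgfint i, fun t ↦ by simpa [mgf] using hsubg i t⟩
  refine (measure_lt_quadForm_le hQ hmeas hindep hsubG (l := (1 - s) / 2)
    (by linarith) (by linarith) m).trans ?_
  rw [Fintype.card_fin, hArank, show 1 - 2 * ((1 - s) / 2) = s by ring]
  exact ENNReal.ofReal_le_ofReal (exp_neg_mul_mul_inv_sqrt_pow_le hm hs hs1 hsj)

/-- If `A` is a symmetric idempotent `n × n` real matrix of rank `j` and
`u₁,…,uₙ` are independent subgaussian random variables with variance proxy `1`, then for every
`m > j`, `P(uᵀAu > m) ≤ exp(-m/2 + √(2mj - j²)/2)`, and consequently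
`P(uᵀAu > m) ≤ exp(-m/2 + √(2mj)/2)`. -/
theorem quadform_tail_bound'
    {Ω : Type} [MeasurableSpace Ω] (P : Measure Ω) [IsProbabilityMeasure P]
    {n j : ℕ} (A : Matrix (Fin n) (Fin n) ℝ)
    (hAsymm : Aᵀ = A) (hAidem : A * A = A) (hArank : A.rank = j)
    (u : Fin n → Ω → ℝ)
    (hmeas : ∀ i, Measurable (u i))
    (hindep : iIndepFun u P)
    (hint : ∀ i, Integrable (u i) P)
    (hmean : ∀ i, ∫ ω, u i ω ∂P = 0)
    (hmgfint : ∀ i (t : ℝ), Integrable (fun ω => Real.exp (t * u i ω)) P)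
    (hsubg : ∀ i (t : ℝ), ∫ ω, Real.exp (t * u i ω) ∂P ≤ Real.exp (t ^ 2 / 2))
    (m : ℝ) (hm : (j : ℝ) < m) :
    P {ω | (fun i => u i ω) ⬝ᵥ A.mulVec (fun i => u i ω) > m} ≤
        ENNReal.ofReal (Real.exp (-m / 2 + Real.sqrt (2 * m * j - (j : ℝ) ^ 2) / 2)) ∧
      P {ω | (fun i => u i ω) ⬝ᵥ A.mulVec (fun i => u i ω) > m} ≤
        ENNReal.ofReal (Real.exp (-m / 2 + Real.sqrt (2 * m * j) / 2)) :=
  quadform_tail_bound'_general P A hAsymm hAidem hArank u hmeas hindep hmgfint hsubg m hm
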